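/- Explicit minimum value: if the prototypes w_1, …, w_k form a simplex equiangular tight frame, then for every label y and every h ∈ E with ‖h‖ ≤ 1, L_y(h) ≥ log( e + (k−1)·exp(−1/(k−1)) ) − 2, and equality holds at h = w_y (i.e., L_y(w_y) = log(e + (k−1)·exp(−1/(k−1))) − 2, where e = exp(1)). -/

import Mathlib

open scoped RealInnerProductSpace

/-- The limiting per-sample loss
`L_y(h) = log( Σ_c exp⟪w_c, h⟫ ) − 2⟪w_y, h⟫`. -/
noncomputable def limitLoss {d k : ℕ} (w : Fin k → EuclideanSpace ℝ (Fin d)) (y : Fin k)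
    (h : EuclideanSpace ℝ (Fin d)) : ℝ :=
  Real.log (∑ c : Fin k, Real.exp ⟪w c, h⟫) - 2 * ⟪w y, h⟫

/-- **Explicit minimum value.** If the unit-norm prototypes form a simplex ETF, then for every
label `y` and every `h` with `‖h‖ ≤ 1`,
`L_y(h) ≥ log( e + (k−1)·exp(−1/(k−1)) ) − 2`, with equality at `h = w_y`. -/
theorem etf_prototype_min_value (d k : ℕ) (hd : 0 < d) (hk : 2 ≤ k)
    (w : Fin k → EuclideanSpace ℝ (Fin d)) (hw : ∀ c, ‖w c‖ = 1)
    (hetf : ∀ c c' : Fin k, c ≠ c' → ⟪w c, w c'⟫ = -1 / ((k : ℝ) - 1)) :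
    ∀ y : Fin k,
      (∀ h : EuclideanSpace ℝ (Fin d), ‖h‖ ≤ 1 →
        limitLoss w y h ≥
          Real.log (Real.exp 1 + ((k : ℝ) - 1) * Real.exp (-1 / ((k : ℝ) - 1))) - 2)
      ∧ limitLoss w y (w y)
          = Real.log (Real.exp 1 + ((k : ℝ) - 1) * Real.exp (-1 / ((k : ℝ) - 1))) - 2 := by
  have hk1 : (1:ℝ) ≤ (k:ℝ) - 1 := by
    have : (2:ℝ) ≤ (k:ℝ) := by exact_mod_cast hk
    linarith
  set K : ℝ := (k:ℝ) - 1 with hKdef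
  have hK : (0:ℝ) < K := by linarith
  have hself : ∀ c, ⟪w c, w c⟫ = 1 := by
    intro c
    rw [real_inner_self_eq_norm_sq, hw c]; norm_num
  have hcard : ∀ c : Fin k, (((Finset.univ : Finset (Fin k)).erase c).card : ℝ) = K := by
    intro c
    rw [Finset.card_erase_of_mem (Finset.mem_univ c), Finset.card_univ, Fintype.card_fin]
    have hk1' : 1 ≤ k := le_trans (by norm_num) hk
    rw [Nat.cast_sub hk1', Nat.cast_one]
  have hrow : ∀ c : Fin k, ∑ c' : Fin k, ⟪w c, w c'⟫ = 0 := by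
    intro c
    rw [← Finset.add_sum_erase _ _ (Finset.mem_univ c), hself c]
    have heq : ∑ c' ∈ Finset.univ.erase c, ⟪w c, w c'⟫
        = ∑ _c' ∈ Finset.univ.erase c, (-1/K) := by
      refine Finset.sum_congr rfl fun c' hc' => ?_
      exact hetf c c' (Ne.symm (Finset.ne_of_mem_erase hc'))
    rw [heq, Finset.sum_const, nsmul_eq_mul, hcard c]
    field_simp
    ring
  have hzero : ∑ c, w c = 0 := by
    have hz : ⟪∑ c, w c, ∑ c, w c⟫ = 0 := by
      rw [sum_inner]
      refine Finset.sum_eq_zero fun c _ => ?_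
      rw [inner_sum]
      exact hrow c
    exact inner_self_eq_zero.mp hz
  have hsum_inner : ∀ h : EuclideanSpace ℝ (Fin d), ∑ c, ⟪w c, h⟫ = 0 := by
    intro h
    rw [← sum_inner, hzero, inner_zero_left]
  intro y
  have hsum_eq : ∑ c, Real.exp ⟪w c, w y⟫ = Real.exp 1 + K * Real.exp (-1/K) := by
    rw [← Finset.add_sum_erase _ _ (Finset.mem_univ y), hself y]
    congr 1
    have heq : ∑ c ∈ Finset.univ.erase y, Real.exp ⟪w c, w y⟫
        = ∑ _c ∈ Finset.univ.erase y, Real.exp (-1/K) := by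
      refine Finset.sum_congr rfl fun c hc => ?_
      rw [hetf c y (Finset.ne_of_mem_erase hc)]
    rw [heq, Finset.sum_const, nsmul_eq_mul, hcard y]
  constructor
  · intro h hh
    set t : ℝ := ⟪w y, h⟫ with ht
    have ht1 : t ≤ 1 := by
      calc t ≤ ‖w y‖ * ‖h‖ := real_inner_le_norm _ _
        _ ≤ 1 := by rw [hw y]; simpa using hh
    have hserase : ∑ c ∈ Finset.univ.erase y, ⟪w c, h⟫ = -t := by
      have h0 := hsum_inner h
      rw [← Finset.add_sum_erase _ _ (Finset.mem_univ y)] at h0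
      rw [← ht] at h0
      linarith
    have key : Real.exp (2*(t-1)) * (Real.exp 1 + K * Real.exp (-1/K))
        ≤ ∑ c, Real.exp ⟪w c, h⟫ := by
      rw [← Finset.add_sum_erase _ _ (Finset.mem_univ y), ← ht, mul_add]
      have h1 : Real.exp (2*(t-1)) * Real.exp 1 ≤ Real.exp t := by
        rw [← Real.exp_add]
        exact Real.exp_le_exp.mpr (by linarith)
      have hm : ∀ c ∈ Finset.univ.erase y,
          Real.exp (-t/K) * (1 + (⟪w c, h⟫ - (-t/K))) ≤ Real.exp ⟪w c, h⟫ := by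
        intro c _
        calc Real.exp (-t/K) * (1 + (⟪w c, h⟫ - (-t/K)))
            ≤ Real.exp (-t/K) * Real.exp (⟪w c, h⟫ - (-t/K)) := by
              apply mul_le_mul_of_nonneg_left ?_ (Real.exp_nonneg _)
              have := Real.add_one_le_exp (⟪w c, h⟫ - (-t/K))
              linarith
          _ = Real.exp ⟪w c, h⟫ := by rw [← Real.exp_add]; ring_nf
      have hsum2 := Finset.sum_le_sum hm
      have lhs_eq : ∑ c ∈ Finset.univ.erase y,
          Real.exp (-t/K) * (1 + (⟪w c, h⟫ - (-t/K))) = Real.exp (-t/K) * K := by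
        rw [← Finset.mul_sum]
        congr 1
        have hterm : ∀ c : Fin k, (1 + (⟪w c, h⟫ - (-t/K))) = ((1 + t/K) + ⟪w c, h⟫) := by
          intro c; ring
        simp_rw [hterm]
        rw [Finset.sum_add_distrib, Finset.sum_const, hserase, nsmul_eq_mul, hcard y]
        field_simp
        ring
      have hineq : 2*(t-1) + (-1/K) ≤ -t/K := by
        have e : (-t/K) - (2*(t-1) + (-1/K)) = (1-t)*(2*K+1)/K := by
          field_simp; ring
        have hnum : (0:ℝ) ≤ (1-t)*(2*K+1)/K :=
          div_nonneg (mul_nonneg (by linarith) (by linarith)) (le_of_lt hK)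
        linarith [e ▸ hnum]
      have h2 : Real.exp (2*(t-1)) * (K * Real.exp (-1/K))
          ≤ ∑ c ∈ Finset.univ.erase y, Real.exp ⟪w c, h⟫ := by
        calc Real.exp (2*(t-1)) * (K * Real.exp (-1/K))
            = Real.exp (2*(t-1) + (-1/K)) * K := by rw [Real.exp_add]; ring
          _ ≤ Real.exp (-t/K) * K :=
              mul_le_mul_of_nonneg_right (Real.exp_le_exp.mpr hineq) (le_of_lt hK)
          _ = ∑ c ∈ Finset.univ.erase y, Real.exp (-t/K) * (1 + (⟪w c, h⟫ - (-t/K))) := lhs_eq.symm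
          _ ≤ _ := hsum2
      exact add_le_add h1 h2
    have hBpos : 0 < Real.exp 1 + K * Real.exp (-1/K) := by positivity
    have hlog : Real.log (Real.exp (2*(t-1)) * (Real.exp 1 + K * Real.exp (-1/K)))
        ≤ Real.log (∑ c, Real.exp ⟪w c, h⟫) :=
      Real.log_le_log (by positivity) key
    rw [Real.log_mul (by positivity) (ne_of_gt hBpos), Real.log_exp] at hlog
    unfold limitLoss
    rw [← ht]
    have : -1 / K = -(1/K) := by ring
    linarith
  · unfold limitLoss
    rw [hsum_eq, hself y]
    norm_num
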